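/- Define the operator Δ on functions f : ℝ → ℝ by (Δf)(x) = f(x) − (1/2) f(x+1) − (1/2) f(x−1), and let h : ℝ → ℝ be h(s) = (1/2)(|s| − 1) for |s| ≤ 1 and h(s) = 0 otherwise. Then for every integer n ≥ 1 and every f : ℝ → ℝ of class C^{2n}, (Δⁿ f)(x) = ∫_ℝ h^{*n}(s) · f^{(2n)}(x − s) ds for all x ∈ ℝ, where h^{*n} denotes the n-fold convolution power of h (supported in [−n, n]). In particular, for n = 1, (Δf)(x) = ∫_ℝ h(s) f''(x − s) ds. -/

import Mathlib

open MeasureTheory Real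

/-- The discrete second-difference operator `(Δf)(x) = f(x) − (1/2) f(x+1) − (1/2) f(x−1)`. -/
noncomputable def deltaOp (f : ℝ → ℝ) : ℝ → ℝ :=
  fun x => f x - (1 / 2) * f (x + 1) - (1 / 2) * f (x - 1)

/-- The tent-like profile `h(s) = (1/2)(|s| − 1)` for `|s| ≤ 1`, and `0` otherwise. -/
noncomputable def hTent (s : ℝ) : ℝ :=
  if |s| ≤ 1 then (1 / 2) * (|s| - 1) else 0

/-- `hStar n` is the `(n+1)`-fold convolution power `h^{*(n+1)}` of `hTent`. -/
noncomputable def hStar : ℕ → ℝ → ℝ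
  | 0 => hTent
  | n + 1 => fun x => ∫ y : ℝ, hTent y * hStar n (x - y)

/-!
Taylor's formula with integral remainder on `[x - 1, x]` and `[x, x + 1]` gives `Δf = h ⋆ f''`.
Since `Δ` is a combination of translations it commutes with convolution, so
`Δⁿ⁺¹ f = Δ (h^{*n} ⋆ f^{(2n)}) = h^{*n} ⋆ (h ⋆ f^{(2n+2)}) = h^{*(n+1)} ⋆ f^{(2n+2)}`
by associativity and commutativity of convolution with the continuous, compactly supported
kernels `h^{*k}`.
-/

open Set ContinuousLinearMap
open scoped Convolution

lemma hTent_of_abs_le {s : ℝ} (hs : |s| ≤ 1) : hTent s = (1 / 2) * (|s| - 1) := if_pos hs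

lemma support_hTent : Function.support hTent ⊆ Ioo (-1) 1 := by
  intro s hs
  rw [mem_Ioo, ← abs_lt]
  by_contra h
  rcases (not_lt.mp h).eq_or_lt with h1 | h1
  · exact hs (by rw [hTent_of_abs_le h1.ge, ← h1]; norm_num)
  · exact hs (if_neg (not_le.mpr h1))

lemma hasCompactSupport_hTent : HasCompactSupport hTent :=
  HasCompactSupport.intro' isCompact_Icc isClosed_Icc fun _ hs =>
    Function.notMem_support.mp fun h => hs (Ioo_subset_Icc_self (support_hTent h))

lemma continuous_hTent : Continuous hTent := by
  have : hTent = fun s => min ((1 / 2) * (|s| - 1)) 0 := by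
    funext s
    unfold hTent
    split_ifs with h
    · rw [min_eq_left (by linarith)]
    · rw [min_eq_right (by linarith [not_le.mp h])]
  rw [this]
  fun_prop

lemma taylor_integral_remainder_one {f f' f'' : ℝ → ℝ} {a b : ℝ}
    (hf : ∀ t ∈ uIcc a b, HasDerivAt f (f' t) t)
    (hf' : ∀ t ∈ uIcc a b, HasDerivAt f' (f'' t) t)
    (hint : IntervalIntegrable f'' volume a b) :
    ∫ t in a..b, (b - t) * f'' t = f b - f a - (b - a) * f' a := by
  have hprimitive : ∀ t ∈ uIcc a b,
      HasDerivAt (fun t => (b - t) * f' t + f t) ((b - t) * f'' t) t := fun t ht => by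
    refine ((((hasDerivAt_id' t).const_sub b).mul (hf' t ht)).add (hf t ht)).congr_deriv ?_
    ring
  rw [intervalIntegral.integral_eq_sub_of_hasDerivAt hprimitive
    (hint.continuousOn_mul (by fun_prop))]
  ring


lemma hTent_sub_of_mem_Icc_left {x t : ℝ} (ht : t ∈ Icc (x - 1) x) :
    hTent (x - t) = (1 / 2) * (x - 1 - t) := by
  rw [hTent_of_abs_le, abs_of_nonneg] <;> grind

lemma hTent_sub_of_mem_Icc_right {x t : ℝ} (ht : t ∈ Icc x (x + 1)) :
    hTent (x - t) = -(1 / 2) * (x + 1 - t) := by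
  rw [hTent_of_abs_le, abs_of_nonpos] <;> grind

lemma integral_hTent_sub_mul_eq_intervalIntegral (F : ℝ → ℝ) (x : ℝ) :
    ∫ t, hTent (x - t) * F t = ∫ t in x - 1..x + 1, hTent (x - t) * F t := by
  refine (intervalIntegral.integral_eq_integral_of_support_subset fun t ht => ?_).symm
  have := support_hTent (left_ne_zero_of_mul ht)
  rw [mem_Ioo] at this
  constructor <;> linarith

lemma deltaOp_eq_convolution {f : ℝ → ℝ} (hf : ContDiff ℝ 2 f) :
    deltaOp f = hTent ⋆[mul ℝ ℝ] iteratedDeriv 2 f := by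
  ext x
  set F := iteratedDeriv 2 f
  have hF : Continuous F := hf.continuous_iteratedDeriv 2 le_rfl
  have hd (t : ℝ) : HasDerivAt f (deriv f t) t :=
    ((hf.differentiable two_ne_zero) t).hasDerivAt
  have hd' (t : ℝ) : HasDerivAt (deriv f) (F t) t := by
    have h1 : ContDiff ℝ 1 (deriv f) := hf.iterate_deriv' 1 1
    rw [show F = deriv (deriv f) by simp only [F, iteratedDeriv_succ, iteratedDeriv_zero]]
    exact ((h1.differentiable one_ne_zero) t).hasDerivAt
  have taylor (a b : ℝ) : ∫ t in a..b, (b - t) * F t = f b - f a - (b - a) * deriv f a :=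
    taylor_integral_remainder_one (fun t _ => hd t) (fun t _ => hd' t) (hF.intervalIntegrable a b)
  have hint (a b : ℝ) : IntervalIntegrable (fun t => hTent (x - t) * F t) volume a b :=
    ((continuous_hTent.comp (continuous_sub_left x)).mul hF).intervalIntegrable a b
  have left : ∫ t in x - 1..x, hTent (x - t) * F t
      = -(1 / 2) * ∫ t in x..x - 1, (x - 1 - t) * F t := by
    rw [intervalIntegral.integral_symm (x - 1) x, mul_neg, neg_mul, neg_neg,
      ← intervalIntegral.integral_const_mul]
    refine intervalIntegral.integral_congr fun t ht => ?_
    rw [uIcc_of_le (by linarith)] at ht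
    rw [hTent_sub_of_mem_Icc_left ht, mul_assoc]
  have right : ∫ t in x..x + 1, hTent (x - t) * F t
      = -(1 / 2) * ∫ t in x..x + 1, (x + 1 - t) * F t := by
    rw [← intervalIntegral.integral_const_mul]
    refine intervalIntegral.integral_congr fun t ht => ?_
    rw [uIcc_of_le (by linarith)] at ht
    rw [hTent_sub_of_mem_Icc_right ht, mul_assoc]
  calc deltaOp f x
      = -(1 / 2) * (∫ t in x..x - 1, (x - 1 - t) * F t)
        + -(1 / 2) * ∫ t in x..x + 1, (x + 1 - t) * F t := by
        rw [taylor, taylor]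
        unfold deltaOp
        ring
    _ = ∫ t in x - 1..x + 1, hTent (x - t) * F t := by
        rw [← left, ← right,
          intervalIntegral.integral_add_adjacent_intervals (hint _ _) (hint _ _)]
    _ = (hTent ⋆[mul ℝ ℝ] F) x := by
        rw [convolution_mul_swap, integral_hTent_sub_mul_eq_intervalIntegral]

lemma convolution_mul_comm (f g : ℝ → ℝ) : f ⋆[mul ℝ ℝ] g = g ⋆[mul ℝ ℝ] f := by
  rw [← convolution_flip, flip_mul]

lemma convolution_mul_assoc {f g k : ℝ → ℝ} (hf : Continuous f) (hfs : HasCompactSupport f)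
    (hg : Continuous g) (hgs : HasCompactSupport g) (hk : Continuous k) :
    (f ⋆[mul ℝ ℝ] g) ⋆[mul ℝ ℝ] k = f ⋆[mul ℝ ℝ] (g ⋆[mul ℝ ℝ] k) := by
  ext x₀
  have hfg := hfs.convolutionExists_left_of_continuous_right (mul ℝ ℝ)
    (hf.locallyIntegrable (μ := volume)) hg
  have hgk := hgs.convolutionExists_left_of_continuous_right (mul ℝ ℝ)
    (hg.locallyIntegrable (μ := volume)) hk
  refine convolution_assoc' _ _ _ _ (fun _ _ _ => mul_assoc _ _ _)
    (.of_forall hfg) (.of_forall hgk) ?_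
  have hsupp : HasCompactSupport
      (Function.uncurry fun x y => f y * (g (x - y) * k (x₀ - x))) := by
    refine HasCompactSupport.intro ((hgs.isCompact.add hfs.isCompact).prod hfs.isCompact) ?_
    intro ⟨x, y⟩ hxy
    by_contra hne
    have hy : f y ≠ 0 := left_ne_zero_of_mul hne
    have hxy' : g (x - y) ≠ 0 := left_ne_zero_of_mul (right_ne_zero_of_mul hne)
    exact hxy ⟨⟨x - y, subset_tsupport _ hxy', y, subset_tsupport _ hy, sub_add_cancel x y⟩,
      subset_tsupport _ hy⟩
  have hint := (Continuous.integrable_of_hasCompactSupport (by fun_prop) hsupp (μ := volume))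
  rwa [Measure.volume_eq_prod] at hint

lemma deltaOp_convolution {g D : ℝ → ℝ} (h : ConvolutionExists g D (mul ℝ ℝ)) :
    deltaOp (g ⋆[mul ℝ ℝ] D) = g ⋆[mul ℝ ℝ] deltaOp D := by
  have hi : ∀ y, Integrable (fun t => g t * D (y - t)) := h
  ext x
  simp only [deltaOp, convolution_mul]
  rw [← integral_const_mul, ← integral_const_mul, ← integral_sub (hi x) ((hi _).const_mul _),
    ← integral_sub ?_ ((hi _).const_mul _)]
  · congr 1 with t
    rw [sub_right_comm x 1 t, add_sub_right_comm x 1 t]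
    ring
  · exact (hi x).sub ((hi _).const_mul _)

lemma hStar_succ (n : ℕ) : hStar (n + 1) = hTent ⋆[mul ℝ ℝ] hStar n := rfl

lemma hasCompactSupport_hStar : ∀ n, HasCompactSupport (hStar n)
  | 0 => hasCompactSupport_hTent
  | n + 1 => by
    rw [hStar_succ]
    exact hasCompactSupport_hTent.convolution (mul ℝ ℝ) (hasCompactSupport_hStar n)

lemma continuous_hStar : ∀ n, Continuous (hStar n)
  | 0 => continuous_hTent
  | n + 1 => by
    rw [hStar_succ]
    exact (hasCompactSupport_hStar n).continuous_convolution_right (mul ℝ ℝ)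
      continuous_hTent.locallyIntegrable (continuous_hStar n)

lemma iteratedDeriv_iteratedDeriv (m k : ℕ) (f : ℝ → ℝ) :
    iteratedDeriv m (iteratedDeriv k f) = iteratedDeriv (m + k) f := by
  simp only [iteratedDeriv_eq_iterate, Function.iterate_add_apply]

lemma iterate_deltaOp_eq_convolution {f : ℝ → ℝ} :
    ∀ n : ℕ, ContDiff ℝ (2 * (n + 1) : ℕ) f →
      deltaOp^[n + 1] f = hStar n ⋆[mul ℝ ℝ] iteratedDeriv (2 * (n + 1)) f
  | 0, hf => deltaOp_eq_convolution hf
  | n + 1, hf => by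
    set D := iteratedDeriv (2 * (n + 1)) f
    have hD : ContDiff ℝ 2 D := by
      have hf₂ : ContDiff ℝ (2 + 2 * (n + 1) : ℕ) f := by convert hf using 2; ring
      simp only [D, iteratedDeriv_eq_iterate]
      exact_mod_cast hf₂.iterate_deriv' 2 _
    have hD'' : iteratedDeriv 2 D = iteratedDeriv (2 * (n + 1 + 1)) f := by
      rw [iteratedDeriv_iteratedDeriv]
      ring_nf
    have hf' : ContDiff ℝ (2 * (n + 1) : ℕ) f := hf.of_le (by norm_cast; omega)
    have hexists := (hasCompactSupport_hStar n).convolutionExists_left_of_continuous_right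
      (mul ℝ ℝ) ((continuous_hStar n).locallyIntegrable (μ := volume)) hD.continuous
    calc deltaOp^[n + 1 + 1] f = deltaOp (hStar n ⋆[mul ℝ ℝ] D) := by
          rw [Function.iterate_succ_apply', iterate_deltaOp_eq_convolution n hf']
      _ = hStar n ⋆[mul ℝ ℝ] (hTent ⋆[mul ℝ ℝ] iteratedDeriv 2 D) := by
          rw [deltaOp_convolution hexists, deltaOp_eq_convolution hD]
      _ = hStar (n + 1) ⋆[mul ℝ ℝ] iteratedDeriv (2 * (n + 1 + 1)) f := by
          rw [← convolution_mul_assoc (continuous_hStar n) (hasCompactSupport_hStar n)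
            continuous_hTent hasCompactSupport_hTent (hD.continuous_iteratedDeriv 2 le_rfl),
            convolution_mul_comm (hStar n), hStar_succ, hD'']

theorem stmt11 :
    (∀ n : ℕ, 1 ≤ n → ∀ f : ℝ → ℝ, ContDiff ℝ (2 * n) f → ∀ x : ℝ,
      (deltaOp^[n] f) x = ∫ s : ℝ, hStar (n - 1) s * iteratedDeriv (2 * n) f (x - s)) ∧
    (∀ f : ℝ → ℝ, ContDiff ℝ 2 f → ∀ x : ℝ,
      deltaOp f x = ∫ s : ℝ, hTent s * iteratedDeriv 2 f (x - s)) := by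
  refine ⟨fun n hn f hf x => ?_, fun f hf x => congrFun (deltaOp_eq_convolution hf) x⟩
  obtain ⟨m, rfl⟩ := Nat.exists_eq_add_of_le' hn
  exact congrFun (iterate_deltaOp_eq_convolution m (by exact_mod_cast hf)) x
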